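/- Let λ ≥ 2 and suppose μ₁, ..., μ_K ∈ ℝ satisfy |μ_l − μ_{l'}| ≥ c·|l − l'|/λ for all l, l' and some c > 0, with K ≤ C·λ^{2/3}. Then for any x ∈ ℝ, ∑_{l=1}^{K} λ^{1/3}·(1 + |x − μ_l|·λ^{2/3})^{-1/2} ≤ C'·λ^{5/6}, where C' depends only on c and C. -/

import Mathlib

open Finset

private lemma sum_inv_sqrt_aux (K : ℕ) :
    ∑ i ∈ Finset.range K, 1 / Real.sqrt (i + 1) ≤ 2 * Real.sqrt K := by
  induction K with
  | zero => simp
  | succ n ih =>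
    rw [Finset.sum_range_succ]
    have h2 : Real.sqrt ((n : ℝ) + 1) ^ 2 = (n : ℝ) + 1 := Real.sq_sqrt (by positivity)
    have h1 : Real.sqrt (n : ℝ) ^ 2 = (n : ℝ) := Real.sq_sqrt (by positivity)
    have h3 : 0 < Real.sqrt ((n : ℝ) + 1) := Real.sqrt_pos.mpr (by positivity)
    have h0 : 0 ≤ Real.sqrt (n : ℝ) := Real.sqrt_nonneg _
    have key : 1 / Real.sqrt ((n : ℝ) + 1) ≤ 2 * Real.sqrt ((n : ℝ) + 1) - 2 * Real.sqrt (n : ℝ) := by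
      rw [div_le_iff₀ h3]
      nlinarith [sq_nonneg (Real.sqrt ((n : ℝ) + 1) - Real.sqrt (n : ℝ))]
    push_cast
    linarith

private lemma nat_dist_cast_real (l m : ℕ) : (Nat.dist l m : ℝ) = |(l : ℝ) - (m : ℝ)| := by
  rcases le_total l m with h | h
  · rw [Nat.dist_eq_sub_of_le h, abs_sub_comm, abs_of_nonneg (sub_nonneg.mpr (Nat.cast_le.mpr h))]
    push_cast [h]
    ring
  · rw [Nat.dist_eq_sub_of_le_right h, abs_of_nonneg (sub_nonneg.mpr (Nat.cast_le.mpr h))]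
    push_cast [h]
    ring

theorem stmt_10 (c C : ℝ) (hc : 0 < c) (hC : 0 < C) :
    ∃ C' > 0, ∀ (lam : ℝ), 2 ≤ lam → ∀ K : ℕ, (K : ℝ) ≤ C * lam ^ ((2:ℝ)/3) →
      ∀ μ : ℕ → ℝ,
        (∀ l ∈ Finset.Icc 1 K, ∀ l' ∈ Finset.Icc 1 K,
          c * |(l : ℝ) - (l' : ℝ)| / lam ≤ |μ l - μ l'|) →
        ∀ x : ℝ,
          (∑ l ∈ Finset.Icc 1 K,
              lam ^ ((1:ℝ)/3) * (1 + |x - μ l| * lam ^ ((2:ℝ)/3)) ^ (-(1:ℝ)/2))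
            ≤ C' * lam ^ ((5:ℝ)/6) := by
  refine ⟨2 + 4 * (2 * C / c) ^ ((1:ℝ)/2), by positivity, ?_⟩
  intro lam hlam K hK μ hsep x
  have hlam0 : (0:ℝ) < lam := by linarith
  have hlam1 : (1:ℝ) ≤ lam := by linarith
  rcases Finset.eq_empty_or_nonempty (Finset.Icc 1 K) with he | hne
  · rw [he, Finset.sum_empty]; positivity
  obtain ⟨l₀, hl₀, hmin⟩ := Finset.exists_min_image _ (fun l => |x - μ l|) hne
  have hl₀K : l₀ ≤ K := (Finset.mem_Icc.mp hl₀).2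
  set a : ℝ := (c/2) * lam ^ (-(1:ℝ)/3) with ha
  have ha0 : 0 < a := by positivity
  set g : ℕ → ℝ := fun j => lam ^ ((1:ℝ)/3) * (1 + a * j) ^ (-(1:ℝ)/2) with hg
  have hg0 : ∀ j : ℕ, 0 ≤ g j := by
    intro j
    have : (0:ℝ) < 1 + a * j := by positivity
    positivity
  -- Step 1: per-term bound
  have hterm : ∀ l ∈ Finset.Icc 1 K,
      lam ^ ((1:ℝ)/3) * (1 + |x - μ l| * lam ^ ((2:ℝ)/3)) ^ (-(1:ℝ)/2) ≤ g (Nat.dist l l₀) := by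
    intro l hl
    have hd : a * (Nat.dist l l₀ : ℝ) ≤ |x - μ l| * lam ^ ((2:ℝ)/3) := by
      have h1 := hsep l hl l₀ hl₀
      have h2 : |μ l - μ l₀| ≤ |x - μ l| + |x - μ l₀| := by
        calc |μ l - μ l₀| = |(μ l - x) + (x - μ l₀)| := by congr 1; ring
          _ ≤ |μ l - x| + |x - μ l₀| := abs_add_le _ _
          _ = |x - μ l| + |x - μ l₀| := by rw [abs_sub_comm (μ l) x]
      have h3 : |x - μ l₀| ≤ |x - μ l| := hmin l hl
      have h4 : c * |(l : ℝ) - (l₀ : ℝ)| / lam ≤ 2 * |x - μ l| := by linarith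
      have hfrac : lam ^ (-(1:ℝ)/3) = lam ^ ((2:ℝ)/3) / lam := by
        rw [show (-(1:ℝ)/3) = (2:ℝ)/3 - 1 by norm_num, Real.rpow_sub hlam0, Real.rpow_one]
      rw [nat_dist_cast_real, ha, hfrac]
      have hE : (0:ℝ) < lam ^ ((2:ℝ)/3) := Real.rpow_pos_of_pos hlam0 _
      rw [div_le_iff₀ hlam0] at h4
      calc c / 2 * (lam ^ ((2:ℝ)/3) / lam) * |(l : ℝ) - (l₀ : ℝ)|
          = (c * |(l : ℝ) - (l₀ : ℝ)|) * (lam ^ ((2:ℝ)/3) / (2 * lam)) := by ring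
        _ ≤ (2 * |x - μ l| * lam) * (lam ^ ((2:ℝ)/3) / (2 * lam)) := by
            apply mul_le_mul_of_nonneg_right h4
            positivity
        _ = |x - μ l| * lam ^ ((2:ℝ)/3) := by field_simp
    have hb : (1 + |x - μ l| * lam ^ ((2:ℝ)/3)) ^ (-(1:ℝ)/2)
        ≤ (1 + a * (Nat.dist l l₀ : ℝ)) ^ (-(1:ℝ)/2) := by
      apply Real.rpow_le_rpow_of_nonpos (by positivity) (by linarith) (by norm_num)
    exact mul_le_mul_of_nonneg_left hb (le_of_lt (Real.rpow_pos_of_pos hlam0 _))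
  have step1 : (∑ l ∈ Finset.Icc 1 K,
      lam ^ ((1:ℝ)/3) * (1 + |x - μ l| * lam ^ ((2:ℝ)/3)) ^ (-(1:ℝ)/2))
      ≤ ∑ l ∈ Finset.Icc 1 K, g (Nat.dist l l₀) := Finset.sum_le_sum hterm
  -- Step 2: fold the two sides
  have step2 : ∑ l ∈ Finset.Icc 1 K, g (Nat.dist l l₀) ≤ 2 * ∑ j ∈ Finset.range (K+1), g j := by
    rw [← Finset.sum_filter_add_sum_filter_not (Finset.Icc 1 K) (fun l => l ≤ l₀), two_mul]
    gcongr ?_ + ?_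
    · calc ∑ l ∈ (Finset.Icc 1 K).filter (fun l => l ≤ l₀), g (Nat.dist l l₀)
          = ∑ j ∈ ((Finset.Icc 1 K).filter (fun l => l ≤ l₀)).image (fun l => l₀ - l), g j := by
            rw [Finset.sum_image]
            · apply Finset.sum_congr rfl
              intro l hl
              simp only [Finset.mem_filter] at hl
              rw [Nat.dist_eq_sub_of_le hl.2]
            · intro l hl l' hl' hll'
              simp only [Finset.mem_coe, Finset.mem_filter, Finset.mem_Icc] at hl hl' hll'
              omega
        _ ≤ ∑ j ∈ Finset.range (K+1), g j := by
            apply Finset.sum_le_sum_of_subset_of_nonneg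
            · intro j hj
              simp only [Finset.mem_image, Finset.mem_filter, Finset.mem_Icc] at hj
              simp only [Finset.mem_range]
              omega
            · intro j _ _; exact hg0 j
    · calc ∑ l ∈ (Finset.Icc 1 K).filter (fun l => ¬ l ≤ l₀), g (Nat.dist l l₀)
          = ∑ j ∈ ((Finset.Icc 1 K).filter (fun l => ¬ l ≤ l₀)).image (fun l => l - l₀), g j := by
            rw [Finset.sum_image]
            · apply Finset.sum_congr rfl
              intro l hl
              simp only [Finset.mem_filter] at hl
              rw [Nat.dist_eq_sub_of_le_right (by omega : l₀ ≤ l)]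
            · intro l hl l' hl' hll'
              simp only [Finset.mem_coe, Finset.mem_filter, Finset.mem_Icc] at hl hl' hll'
              omega
        _ ≤ ∑ j ∈ Finset.range (K+1), g j := by
            apply Finset.sum_le_sum_of_subset_of_nonneg
            · intro j hj
              simp only [Finset.mem_image, Finset.mem_filter, Finset.mem_Icc] at hj
              simp only [Finset.mem_range]
              omega
            · intro j _ _; exact hg0 j
  -- Step 3: evaluate the model sum
  have step3 : ∑ j ∈ Finset.range (K+1), g j
      ≤ lam ^ ((1:ℝ)/3) + lam ^ ((1:ℝ)/3) * a ^ (-(1:ℝ)/2) * (2 * Real.sqrt K) := by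
    rw [Finset.sum_range_succ' g K]
    have hg0' : g 0 = lam ^ ((1:ℝ)/3) := by
      simp [hg, Real.rpow_natCast]
    have hgi : ∀ i ∈ Finset.range K, g (i+1)
        ≤ lam ^ ((1:ℝ)/3) * a ^ (-(1:ℝ)/2) * (1 / Real.sqrt (i + 1)) := by
      intro i _
      have hi1 : (0:ℝ) < (i:ℝ) + 1 := by positivity
      have h1 : (1 + a * ((i+1 : ℕ) : ℝ)) ^ (-(1:ℝ)/2) ≤ (a * ((i:ℝ)+1)) ^ (-(1:ℝ)/2) := by
        push_cast
        apply Real.rpow_le_rpow_of_nonpos (by positivity) (by linarith) (by norm_num)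
      have h2 : (a * ((i:ℝ)+1)) ^ (-(1:ℝ)/2) = a ^ (-(1:ℝ)/2) * (1 / Real.sqrt ((i:ℝ)+1)) := by
        rw [Real.mul_rpow ha0.le hi1.le]
        congr 1
        rw [show (-(1:ℝ)/2) = -((1:ℝ)/2) by norm_num, Real.rpow_neg hi1.le,
          ← Real.sqrt_eq_rpow, one_div]
      calc g (i+1) = lam ^ ((1:ℝ)/3) * (1 + a * ((i+1 : ℕ) : ℝ)) ^ (-(1:ℝ)/2) := rfl
        _ ≤ lam ^ ((1:ℝ)/3) * (a ^ (-(1:ℝ)/2) * (1 / Real.sqrt ((i:ℝ)+1))) := by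
            rw [← h2]
            exact mul_le_mul_of_nonneg_left h1 (le_of_lt (Real.rpow_pos_of_pos hlam0 _))
        _ = lam ^ ((1:ℝ)/3) * a ^ (-(1:ℝ)/2) * (1 / Real.sqrt ((i:ℝ)+1)) := by ring
    have hsum := Finset.sum_le_sum hgi
    have haux := sum_inv_sqrt_aux K
    have hpos : (0:ℝ) ≤ lam ^ ((1:ℝ)/3) * a ^ (-(1:ℝ)/2) := by
      have := Real.rpow_pos_of_pos hlam0 ((1:ℝ)/3)
      have := Real.rpow_pos_of_pos ha0 (-(1:ℝ)/2)
      positivity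
    calc (∑ i ∈ Finset.range K, g (i+1)) + g 0
        ≤ (∑ i ∈ Finset.range K, lam ^ ((1:ℝ)/3) * a ^ (-(1:ℝ)/2) * (1 / Real.sqrt (i + 1)))
            + lam ^ ((1:ℝ)/3) := by
          rw [hg0']
          exact add_le_add_left hsum _
      _ = lam ^ ((1:ℝ)/3) * a ^ (-(1:ℝ)/2) * (∑ i ∈ Finset.range K, 1 / Real.sqrt (i + 1))
            + lam ^ ((1:ℝ)/3) := by rw [← Finset.mul_sum]
      _ ≤ lam ^ ((1:ℝ)/3) * a ^ (-(1:ℝ)/2) * (2 * Real.sqrt K) + lam ^ ((1:ℝ)/3) := by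
          exact add_le_add_left (mul_le_mul_of_nonneg_left haux hpos) _
      _ = lam ^ ((1:ℝ)/3) + lam ^ ((1:ℝ)/3) * a ^ (-(1:ℝ)/2) * (2 * Real.sqrt K) := by ring
  -- Step 4: compute a ^ (-1/2) and √K bounds
  have hc2 : ((c:ℝ)/2) ^ (-(1:ℝ)/2) = (2/c) ^ ((1:ℝ)/2) := by
    rw [show (-(1:ℝ)/2) = -((1:ℝ)/2) by norm_num, Real.rpow_neg (by positivity),
      ← Real.inv_rpow (by positivity), show ((c:ℝ)/2)⁻¹ = 2/c by field_simp]
  have ha12 : a ^ (-(1:ℝ)/2) = (2/c) ^ ((1:ℝ)/2) * lam ^ ((1:ℝ)/6) := by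
    rw [ha, Real.mul_rpow (by positivity) (Real.rpow_pos_of_pos hlam0 _).le, hc2,
      ← Real.rpow_mul hlam0.le]
    norm_num
  have hsqrtK : Real.sqrt K ≤ C ^ ((1:ℝ)/2) * lam ^ ((1:ℝ)/3) := by
    have h1 : Real.sqrt K ≤ Real.sqrt (C * lam ^ ((2:ℝ)/3)) := Real.sqrt_le_sqrt hK
    have h2 : Real.sqrt (C * lam ^ ((2:ℝ)/3)) = C ^ ((1:ℝ)/2) * lam ^ ((1:ℝ)/3) := by
      rw [Real.sqrt_eq_rpow,
        Real.mul_rpow hC.le (Real.rpow_pos_of_pos hlam0 _).le,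
        ← Real.rpow_mul hlam0.le]
      norm_num
    rw [← h2]; exact h1
  have hcc : (2/c) ^ ((1:ℝ)/2) * C ^ ((1:ℝ)/2) = (2*C/c) ^ ((1:ℝ)/2) := by
    rw [← Real.mul_rpow (by positivity) hC.le]
    congr 1
    ring
  have hmulpow : lam ^ ((1:ℝ)/3) * lam ^ ((1:ℝ)/6) * lam ^ ((1:ℝ)/3) = lam ^ ((5:ℝ)/6) := by
    rw [← Real.rpow_add hlam0, ← Real.rpow_add hlam0]
    norm_num
  have h13 : lam ^ ((1:ℝ)/3) ≤ lam ^ ((5:ℝ)/6) :=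
    Real.rpow_le_rpow_of_exponent_le hlam1 (by norm_num)
  have hK' : lam ^ ((1:ℝ)/3) * a ^ (-(1:ℝ)/2) * (2 * Real.sqrt K)
      ≤ 2 * (2*C/c) ^ ((1:ℝ)/2) * lam ^ ((5:ℝ)/6) := by
    rw [ha12]
    calc lam ^ ((1:ℝ)/3) * ((2/c) ^ ((1:ℝ)/2) * lam ^ ((1:ℝ)/6)) * (2 * Real.sqrt K)
        ≤ lam ^ ((1:ℝ)/3) * ((2/c) ^ ((1:ℝ)/2) * lam ^ ((1:ℝ)/6))
            * (2 * (C ^ ((1:ℝ)/2) * lam ^ ((1:ℝ)/3))) := by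
          have hnn : (0:ℝ) ≤ lam ^ ((1:ℝ)/3) * ((2/c) ^ ((1:ℝ)/2) * lam ^ ((1:ℝ)/6)) := by
            have := Real.rpow_pos_of_pos hlam0 ((1:ℝ)/3)
            have := Real.rpow_pos_of_pos hlam0 ((1:ℝ)/6)
            positivity
          apply mul_le_mul_of_nonneg_left _ hnn
          linarith [hsqrtK]
      _ = 2 * ((2/c) ^ ((1:ℝ)/2) * C ^ ((1:ℝ)/2))
            * (lam ^ ((1:ℝ)/3) * lam ^ ((1:ℝ)/6) * lam ^ ((1:ℝ)/3)) := by ring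
      _ = 2 * (2*C/c) ^ ((1:ℝ)/2) * lam ^ ((5:ℝ)/6) := by rw [hcc, hmulpow]
  calc (∑ l ∈ Finset.Icc 1 K,
          lam ^ ((1:ℝ)/3) * (1 + |x - μ l| * lam ^ ((2:ℝ)/3)) ^ (-(1:ℝ)/2))
      ≤ ∑ l ∈ Finset.Icc 1 K, g (Nat.dist l l₀) := step1
    _ ≤ 2 * ∑ j ∈ Finset.range (K+1), g j := step2
    _ ≤ 2 * (lam ^ ((1:ℝ)/3) + lam ^ ((1:ℝ)/3) * a ^ (-(1:ℝ)/2) * (2 * Real.sqrt K)) := by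
        linarith [step3]
    _ ≤ 2 * (lam ^ ((5:ℝ)/6) + 2 * (2*C/c) ^ ((1:ℝ)/2) * lam ^ ((5:ℝ)/6)) := by
        linarith [hK', h13]
    _ = (2 + 4 * (2 * C / c) ^ ((1:ℝ)/2)) * lam ^ ((5:ℝ)/6) := by ring
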